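/- Let B3 be the presented group with generators σ1, σ2 and relation σ1σ2σ1 = σ2σ1σ2 (the braid group on 3 strands). The group homomorphism g : B3 → PSL(2,ℤ) determined by g(σ1) = [A] and g(σ2) = [B], where A = !![1,1; 0,1] and B = !![1,0; -1,1], is well defined and surjective, and its kernel equals the center of B3. -/

import Mathlib

/-- `SL(2,ℤ)`: 2×2 integer matrices of determinant 1. -/
abbrev SL2Z := Matrix.SpecialLinearGroup (Fin 2) ℤ

/-- The matrix `A = !![1,1; 0,1]` as an element of `SL(2,ℤ)`. -/
def MA : SL2Z := ⟨!![1, 1; 0, 1], by norm_num [Matrix.det_fin_two_of]⟩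

/-- The matrix `B = !![1,0; -1,1]` as an element of `SL(2,ℤ)`. -/
def MB : SL2Z := ⟨!![1, 0; -1, 1], by norm_num [Matrix.det_fin_two_of]⟩

/-- `PSL(2,ℤ)`: the quotient of `SL(2,ℤ)` by its center `{±1}`. -/
abbrev PSL2Z := SL2Z ⧸ Subgroup.center SL2Z

/-- Relation for the braid group on 3 strands `B3 = ⟨σ1, σ2 | σ1σ2σ1 = σ2σ1σ2⟩`,
with `σ1` corresponding to `0` and `σ2` to `1`. -/
def b3Rels : Set (FreeGroup (Fin 2)) :=
  { FreeGroup.of 0 * FreeGroup.of 1 * FreeGroup.of 0 *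
      (FreeGroup.of 1 * FreeGroup.of 0 * FreeGroup.of 1)⁻¹ }

/-- The braid group on 3 strands, presented as `⟨σ1, σ2 | σ1σ2σ1 = σ2σ1σ2⟩`. -/
abbrev B3 := PresentedGroup b3Rels

/-- The generator `σ1` of `B3`. -/
def b3s1 : B3 := PresentedGroup.of 0

/-- The generator `σ2` of `B3`. -/
def b3s2 : B3 := PresentedGroup.of 1

/-!
Write `Δ = σ1σ2σ1`. The braid relation gives `Δσ1 = σ2Δ`, `Δσ2 = σ1Δ` and `(σ1σ2)³ = Δ²`, so
`Δ²` is central, and `Δ`, `σ1σ2` generate `B3`. Under `g` they go to `[ABA] = [S⁻¹]` and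
`[AB] = [S⁻¹T⁻¹]`, of orders 2 and 3. Acting on the upper half-plane, `[S⁻¹]` maps `Re > 0` into
`Re < 0` while `[S⁻¹T⁻¹]` and its square `[TS]` map `Re < 0` into `Re > 0`, so by ping-pong
`ℤ/2 ∗ ℤ/3 → PSL(2,ℤ)` is injective. It factors through `ℤ/2 ∗ ℤ/3 ↠ B3 ⧸ ⟪Δ²⟫`, so `g` induces an
injection on `B3 ⧸ ⟪Δ²⟫`, i.e. `ker g = ⟪Δ²⟫ ≤ Z(B3)`.

Since `A = T` and `ABA = S⁻¹`, the generators `S, T` of `SL(2,ℤ)` lie in the image, so `g` is onto.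
Then `g` maps `Z(B3)` into `Z(PSL(2,ℤ))`, which is trivial: if `[M]` commutes with `[N]` then
`M⁻¹NM = ±N`, and comparing traces forces the sign `+` when `tr N ≠ 0`; so a central `[M]` has
`M` commuting with `A` and `B`, hence with all of `SL(2,ℤ)`.
-/

open ModularGroup UpperHalfPlane

section Cyclic

variable {G G' : Type*} [Group G] [Group G'] {n : ℕ}

def zmodPowHom (g : G) (hg : g ^ n = 1) : Multiplicative (ZMod n) →* G :=
  AddMonoidHom.toMultiplicativeLeft <|
    ZMod.lift n ⟨zmultiplesHom (Additive G) (Additive.ofMul g), by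
      rw [zmultiplesHom_apply, natCast_zsmul, ← ofMul_pow, hg, ofMul_one]⟩

theorem zmodPowHom_ofAdd_intCast (g : G) (hg : g ^ n = 1) (k : ℤ) :
    zmodPowHom g hg (Multiplicative.ofAdd (k : ZMod n)) = g ^ k := by
  simp [zmodPowHom]

theorem zmodPowHom_ofAdd_natCast (g : G) (hg : g ^ n = 1) (k : ℕ) :
    zmodPowHom g hg (Multiplicative.ofAdd (k : ZMod n)) = g ^ k := by
  simpa using zmodPowHom_ofAdd_intCast g hg k

theorem zmodPowHom_apply [NeZero n] (g : G) (hg : g ^ n = 1) (x : Multiplicative (ZMod n)) :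
    zmodPowHom g hg x = g ^ x.toAdd.val := by
  conv_lhs => rw [← ofAdd_toAdd x, ← ZMod.natCast_zmod_val x.toAdd]
  exact zmodPowHom_ofAdd_natCast g hg _

theorem map_zmodPowHom (f : G →* G') (g : G) (hg : g ^ n = 1) (x : Multiplicative (ZMod n)) :
    f (zmodPowHom g hg x) = zmodPowHom (f g) (by rw [← map_pow, hg, map_one]) x := by
  obtain ⟨k, hk⟩ := ZMod.intCast_surjective x.toAdd
  rw [← ofAdd_toAdd x, ← hk, zmodPowHom_ofAdd_intCast, zmodPowHom_ofAdd_intCast, map_zpow]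

open Pointwise in
theorem zmodPowHom_smul_subset {α : Type*} [MulAction G α] [NeZero n] {g : G} (hg : g ^ n = 1)
    {X Y : Set α} (h : ∀ k, 0 < k → k < n → ∀ x ∈ X, g ^ k • x ∈ Y)
    (x : Multiplicative (ZMod n)) (hx : x ≠ 1) : zmodPowHom g hg x • X ⊆ Y := by
  have hval : x.toAdd.val ≠ 0 := by
    rwa [Ne, ZMod.val_eq_zero, toAdd_eq_zero]
  rw [zmodPowHom_apply, Set.smul_set_subset_iff]
  exact h _ (Nat.pos_of_ne_zero hval) (ZMod.val_lt _)

end Cyclic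

section CoprodCyclic

variable {ι G G' : Type*} [Group G] [Group G'] (n : ι → ℕ)

noncomputable def coprodZModLift (g : ι → G) (hg : ∀ i, g i ^ n i = 1) :
    Monoid.CoprodI (fun i => Multiplicative (ZMod (n i))) →* G :=
  Monoid.CoprodI.lift fun i => zmodPowHom (g i) (hg i)

variable {n}

theorem coprodZModLift_of (g : ι → G) (hg : ∀ i, g i ^ n i = 1) (i : ι)
    (x : Multiplicative (ZMod (n i))) :
    coprodZModLift n g hg (Monoid.CoprodI.of x) = zmodPowHom (g i) (hg i) x :=
  Monoid.CoprodI.lift_of _ _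

theorem comp_coprodZModLift (f : G →* G') {g : ι → G} {g' : ι → G'} (hg : ∀ i, g i ^ n i = 1)
    (hg' : ∀ i, g' i ^ n i = 1) (hf : ∀ i, f (g i) = g' i) :
    f.comp (coprodZModLift n g hg) = coprodZModLift n g' hg' := by
  refine Monoid.CoprodI.ext_hom _ _ fun i => MonoidHom.ext fun x => ?_
  simp only [MonoidHom.comp_apply, coprodZModLift_of, map_zmodPowHom, hf]

theorem coprodZModLift_surjective {g : ι → G} (hg : ∀ i, g i ^ n i = 1)
    (hgen : Subgroup.closure (Set.range g) = ⊤) : Function.Surjective (coprodZModLift n g hg) := by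
  refine MonoidHom.range_eq_top.mp (eq_top_iff.mpr (hgen ▸ Subgroup.closure_le _ |>.mpr ?_))
  rintro _ ⟨i, rfl⟩
  exact ⟨Monoid.CoprodI.of (Multiplicative.ofAdd (1 : ZMod (n i))), by
    rw [coprodZModLift_of]; simpa using zmodPowHom_ofAdd_natCast (g i) (hg i) 1⟩

end CoprodCyclic

theorem Subgroup.mem_center_of_forall_commute {G : Type*} [Group G] {s : Set G}
    (hs : Subgroup.closure s = ⊤) {g : G} (h : ∀ x ∈ s, Commute x g) : g ∈ Subgroup.center G := by
  rw [← Subgroup.centralizer_univ, ← Subgroup.coe_top, ← hs, Subgroup.centralizer_closure]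
  exact fun x hx => (h x hx).eq

theorem Matrix.SpecialLinearGroup.commute_of_commute_mk {n R : Type*} [Fintype n] [DecidableEq n]
    [CommRing R] [NoZeroDivisors R] {M N : SpecialLinearGroup n R}
    (hN : trace (N : Matrix n n R) ≠ 0) (h : Commute (M : ProjectiveSpecialLinearGroup n R) N) :
    Commute M N := by
  set Z := (M * N)⁻¹ * (N * M) with hZ
  obtain ⟨r, -, hr⟩ := mem_center_iff.mp (QuotientGroup.eq.mp h.eq : Z ∈ _)
  have hconj : M⁻¹ * N * M = N * Z := by
    rw [hZ]; group
  have htrace : trace (N : Matrix n n R) = r * trace (N : Matrix n n R) := calc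
    trace (N : Matrix n n R) = trace ((M⁻¹ * N * M : SpecialLinearGroup n R) : Matrix n n R) := by
      rw [coe_mul, coe_mul, trace_mul_cycle, ← coe_mul, mul_inv_cancel, coe_one, one_mul]
    _ = r * trace (N : Matrix n n R) := by
      rw [hconj, coe_mul, ← hr, scalar_apply, trace_mul_comm, ← smul_eq_diagonal_mul, trace_smul,
        smul_eq_mul]
  have hr1 : r = 1 := mul_right_cancel₀ hN (htrace.symm.trans (one_mul _).symm)
  have hZ1 : Z = 1 := Subtype.ext (by rw [← hr, hr1, map_one, coe_one])
  exact inv_mul_eq_one.mp hZ1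

theorem MA_eq_T : MA = T := rfl

theorem MA_mul_MB_mul_MA : MA * MB * MA = S⁻¹ := by decide

theorem MB_mul_MA_mul_MB : MB * MA * MB = S⁻¹ := by decide

theorem MA_mul_MB : MA * MB = S⁻¹ * T⁻¹ := by decide

theorem closure_MA_MB : Subgroup.closure {MA, MB} = ⊤ := by
  rw [eq_top_iff, ← SpecialLinearGroup.SL2Z_generators, Subgroup.closure_le,
    Set.insert_subset_iff, Set.singleton_subset_iff, ← inv_inv S, ← MA_mul_MB_mul_MA, ← MA_eq_T]
  have hA : MA ∈ Subgroup.closure {MA, MB} := Subgroup.subset_closure (Set.mem_insert _ _)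
  have hB : MB ∈ Subgroup.closure {MA, MB} :=
    Subgroup.subset_closure (Set.mem_insert_of_mem _ rfl)
  exact ⟨inv_mem (mul_mem (mul_mem hA hB) hA), hA⟩

theorem neg_one_mem_center_SL2Z : (-1 : SL2Z) ∈ Subgroup.center SL2Z :=
  Subgroup.mem_center_iff.mpr fun g => by simp

theorem mk_MA_mul_MB_mul_MA_pow_two : (QuotientGroup.mk (MA * MB * MA) : PSL2Z) ^ 2 = 1 := by
  rw [← QuotientGroup.mk_pow, QuotientGroup.eq_one_iff, show (MA * MB * MA) ^ 2 = -1 by decide]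
  exact neg_one_mem_center_SL2Z

theorem mk_MA_mul_MB_pow_three : (QuotientGroup.mk (MA * MB) : PSL2Z) ^ 3 = 1 := by
  rw [← QuotientGroup.mk_pow, QuotientGroup.eq_one_iff, show (MA * MB) ^ 3 = -1 by decide]
  exact neg_one_mem_center_SL2Z

theorem center_PSL2Z_eq_bot : Subgroup.center PSL2Z = ⊥ := by
  refine eq_bot_iff.mpr fun p hp => ?_
  induction p using QuotientGroup.induction_on with | H M =>
  have hcomm (N : SL2Z) (hN : Matrix.trace (N : Matrix (Fin 2) (Fin 2) ℤ) ≠ 0) : Commute N M :=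
    (Matrix.SpecialLinearGroup.commute_of_commute_mk hN
      (Subgroup.mem_center_iff.mp hp N).symm).symm
  refine (QuotientGroup.eq_one_iff M).mpr
    (Subgroup.mem_center_of_forall_commute closure_MA_MB ?_)
  rintro N (rfl | rfl)
  · exact hcomm MA (by decide)
  · exact hcomm MB (by decide)

noncomputable instance : MulAction PSL2Z ℍ :=
  MulAction.compHom ℍ
    ((Matrix.ProjGenLinGroup.map (Int.castRingHom ℝ)).comp
      Matrix.ProjectiveSpecialLinearGroup.toPGL)

theorem psl2z_mk_smul (M : SL2Z) (z : ℍ) : (QuotientGroup.mk M : PSL2Z) • z = M • z := rfl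

theorem re_S_smul (z : ℍ) : (S • z).re = -z.re / Complex.normSq z := by
  rw [modular_S_smul, mk_re, inv_neg, Complex.neg_re, Complex.inv_re, coe_re, neg_div]

theorem re_S_smul_neg {z : ℍ} (hz : 0 < z.re) : (S • z).re < 0 := by
  rw [re_S_smul]
  exact div_neg_of_neg_of_pos (neg_neg_of_pos hz) (Complex.normSq_pos.mpr z.ne_zero)

theorem re_S_smul_pos {z : ℍ} (hz : z.re < 0) : 0 < (S • z).re := by
  rw [re_S_smul]
  exact div_pos (neg_pos_of_neg hz) (Complex.normSq_pos.mpr z.ne_zero)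

theorem re_S_inv_smul (z : ℍ) : (S⁻¹ • z).re = (S • z).re := by
  rw [S_inv, SL_neg_smul]

def pslGens : Fin 2 → PSL2Z :=
  ![QuotientGroup.mk (MA * MB * MA), QuotientGroup.mk (MA * MB)]

theorem pslGens_pow (i : Fin 2) : pslGens i ^ ![2, 3] i = 1 := by
  fin_cases i
  exacts [mk_MA_mul_MB_mul_MA_pow_two, mk_MA_mul_MB_pow_three]

theorem re_pslGens_zero_smul (z : ℍ) : (pslGens 0 • z).re = (S • z).re := by
  rw [pslGens, Matrix.cons_val_zero, psl2z_mk_smul, MA_mul_MB_mul_MA, re_S_inv_smul]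

theorem re_pslGens_one_smul (z : ℍ) : (pslGens 1 • z).re = (S • T⁻¹ • z).re := by
  rw [pslGens, Matrix.cons_val_one, Matrix.cons_val_zero, psl2z_mk_smul, MA_mul_MB, mul_smul,
    re_S_inv_smul]

theorem re_pslGens_one_sq_smul (z : ℍ) : (pslGens 1 ^ 2 • z).re = (S • z).re + 1 := by
  have hinv : pslGens 1 ^ 2 = (pslGens 1)⁻¹ :=
    eq_inv_of_mul_eq_one_left (by rw [← pow_succ]; exact pslGens_pow 1)
  rw [hinv, pslGens, Matrix.cons_val_one, Matrix.cons_val_zero, ← QuotientGroup.mk_inv,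
    psl2z_mk_smul, MA_mul_MB, _root_.mul_inv_rev, inv_inv, inv_inv, mul_smul, re_T_smul]

noncomputable def freeProdToPSL :
    Monoid.CoprodI (fun i => Multiplicative (ZMod (![2, 3] i))) →* PSL2Z :=
  coprodZModLift ![2, 3] pslGens pslGens_pow

def pingPongSets : Fin 2 → Set ℍ := ![{z | z.re < 0}, {z | 0 < z.re}]

open Pointwise in
theorem pslGens_pingPong : Pairwise fun i j => ∀ h : Multiplicative (ZMod (![2, 3] i)), h ≠ 1 →
    zmodPowHom (pslGens i) (pslGens_pow i) h • pingPongSets j ⊆ pingPongSets i := by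
  intro i j hij
  fin_cases i <;> fin_cases j
  · exact absurd rfl hij
  · refine zmodPowHom_smul_subset (n := 2) _ fun k hk0 hk2 z hz => ?_
    obtain rfl : k = 1 := by omega
    have hz : 0 < z.re := hz
    show (pslGens 0 ^ 1 • z).re < 0
    rw [pow_one, re_pslGens_zero_smul]
    exact re_S_smul_neg hz
  · refine zmodPowHom_smul_subset (n := 3) _ fun k hk0 hk3 z hz => ?_
    have hz : z.re < 0 := hz
    show 0 < (pslGens 1 ^ k • z).re
    obtain rfl | rfl : k = 1 ∨ k = 2 := by omega
    · rw [pow_one, re_pslGens_one_smul]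
      exact re_S_smul_pos (by rw [re_T_inv_smul]; linarith)
    · rw [re_pslGens_one_sq_smul]
      linarith [re_S_smul_pos hz]
  · exact absurd rfl hij

theorem freeProdToPSL_injective : Function.Injective freeProdToPSL := by
  refine Monoid.CoprodI.lift_injective_of_ping_pong _ (.inr ⟨1, ?_⟩) pingPongSets ?_ ?_
    pslGens_pingPong
  · show 3 ≤ Cardinal.mk (Multiplicative (ZMod 3))
    simp
  · intro i
    fin_cases i
    exacts [⟨⟨-1 + Complex.I, by simp⟩, by simp [pingPongSets]⟩,
      ⟨⟨1 + Complex.I, by simp⟩, by simp [pingPongSets]⟩]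
  · intro i j hij
    fin_cases i <;> fin_cases j
    all_goals first
      | exact absurd rfl hij
      | exact Set.disjoint_left.mpr fun z h1 h2 => by simp [pingPongSets] at h1 h2; linarith

theorem b3_braid_relation : b3s1 * b3s2 * b3s1 = b3s2 * b3s1 * b3s2 := by
  have h := PresentedGroup.one_of_mem (rels := b3Rels) (Set.mem_singleton _)
  rwa [map_mul, map_inv, mul_inv_eq_one] at h

def halfTwist : B3 := b3s1 * b3s2 * b3s1

theorem halfTwist_mul_b3s1 : halfTwist * b3s1 = b3s2 * halfTwist := calc
  halfTwist * b3s1 = b3s2 * b3s1 * b3s2 * b3s1 := by rw [halfTwist, b3_braid_relation]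
  _ = b3s2 * halfTwist := by rw [halfTwist]; group

theorem halfTwist_mul_b3s2 : halfTwist * b3s2 = b3s1 * halfTwist := calc
  halfTwist * b3s2 = b3s1 * (b3s2 * b3s1 * b3s2) := by rw [halfTwist]; group
  _ = b3s1 * halfTwist := by rw [halfTwist, b3_braid_relation]

theorem halfTwist_sq_mem_center : halfTwist ^ 2 ∈ Subgroup.center B3 := by
  refine Subgroup.mem_center_of_forall_commute (PresentedGroup.closure_range_of b3Rels) ?_
  rintro _ ⟨i, rfl⟩
  fin_cases i
  · show b3s1 * halfTwist ^ 2 = halfTwist ^ 2 * b3s1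
    rw [sq, ← mul_assoc, ← halfTwist_mul_b3s2, mul_assoc, ← halfTwist_mul_b3s1, mul_assoc]
  · show b3s2 * halfTwist ^ 2 = halfTwist ^ 2 * b3s2
    rw [sq, ← mul_assoc, ← halfTwist_mul_b3s1, mul_assoc, ← halfTwist_mul_b3s2, mul_assoc]

theorem b3s1_mul_b3s2_pow_three : (b3s1 * b3s2) ^ 3 = halfTwist ^ 2 := by
  rw [sq, halfTwist]
  nth_rw 2 [b3_braid_relation]
  simp only [pow_succ, pow_zero, one_mul, mul_assoc]

def b3Gens : Fin 2 → B3 := ![halfTwist, b3s1 * b3s2]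

theorem closure_range_b3Gens : Subgroup.closure (Set.range b3Gens) = ⊤ := by
  have hΔ : halfTwist ∈ Subgroup.closure (Set.range b3Gens) := Subgroup.subset_closure ⟨0, rfl⟩
  have hy : b3s1 * b3s2 ∈ Subgroup.closure (Set.range b3Gens) := Subgroup.subset_closure ⟨1, rfl⟩
  rw [eq_top_iff, ← PresentedGroup.closure_range_of, Subgroup.closure_le]
  rintro _ ⟨i, rfl⟩
  fin_cases i
  · show b3s1 ∈ Subgroup.closure (Set.range b3Gens)
    convert mul_mem (inv_mem hy) hΔ using 1
    rw [halfTwist]; group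
  · show b3s2 ∈ Subgroup.closure (Set.range b3Gens)
    convert mul_mem (inv_mem hΔ) (pow_mem hy 2) using 1
    rw [halfTwist, sq]; group

noncomputable def braidToPSL : B3 →* PSL2Z :=
  PresentedGroup.toGroup (f := ![QuotientGroup.mk MA, QuotientGroup.mk MB]) <| by
    rintro _ rfl
    simp only [map_mul, map_inv, FreeGroup.lift_apply_of, mul_inv_eq_one]
    simp [← QuotientGroup.mk_mul, MA_mul_MB_mul_MA, MB_mul_MA_mul_MB]

theorem braidToPSL_b3s1 : braidToPSL b3s1 = QuotientGroup.mk MA := PresentedGroup.toGroup.of _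

theorem braidToPSL_b3s2 : braidToPSL b3s2 = QuotientGroup.mk MB := PresentedGroup.toGroup.of _

theorem braidToPSL_b3Gens (i : Fin 2) : braidToPSL (b3Gens i) = pslGens i := by
  fin_cases i <;>
    simp [b3Gens, pslGens, halfTwist, braidToPSL_b3s1, braidToPSL_b3s2, QuotientGroup.mk_mul]

theorem braidToPSL_surjective : Function.Surjective braidToPSL := by
  rw [← MonoidHom.range_eq_top, eq_top_iff, ← (QuotientGroup.mk' _).range_eq_top.mpr
    (QuotientGroup.mk'_surjective _), MonoidHom.range_eq_map, ← closure_MA_MB,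
    MonoidHom.map_closure, Subgroup.closure_le, Set.image_pair]
  rintro _ (rfl | rfl)
  exacts [⟨b3s1, braidToPSL_b3s1⟩, ⟨b3s2, braidToPSL_b3s2⟩]

theorem center_le_ker_braidToPSL : Subgroup.center B3 ≤ braidToPSL.ker := by
  intro z hz
  rw [MonoidHom.mem_ker, ← Subgroup.mem_bot, ← center_PSL2Z_eq_bot, Subgroup.mem_center_iff]
  intro p
  obtain ⟨w, rfl⟩ := braidToPSL_surjective p
  rw [← map_mul, ← map_mul, Subgroup.mem_center_iff.mp hz w]

theorem ker_braidToPSL : braidToPSL.ker = Subgroup.normalClosure {halfTwist ^ 2} := by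
  set K := Subgroup.normalClosure {halfTwist ^ 2}
  have hKker : K ≤ braidToPSL.ker := Subgroup.normalClosure_le_normal <|
    Set.singleton_subset_iff.mpr <| by
      rw [SetLike.mem_coe, MonoidHom.mem_ker, map_pow, show halfTwist = b3Gens 0 from rfl,
        braidToPSL_b3Gens]
      exact pslGens_pow 0
  have hgens_pow (i : Fin 2) : (b3Gens i : B3 ⧸ K) ^ ![2, 3] i = 1 := by
    rw [← QuotientGroup.mk_pow, QuotientGroup.eq_one_iff]
    fin_cases i
    · exact Subgroup.subset_normalClosure rfl
    · exact b3s1_mul_b3s2_pow_three ▸ Subgroup.subset_normalClosure rfl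
  have hsurj := coprodZModLift_surjective hgens_pow <| by
    rw [show (fun i => (b3Gens i : B3 ⧸ K)) = QuotientGroup.mk' K ∘ b3Gens from rfl,
      Set.range_comp, ← MonoidHom.map_closure, closure_range_b3Gens, ← MonoidHom.range_eq_map,
      QuotientGroup.range_mk']
  have hcomp : (QuotientGroup.lift K braidToPSL hKker).comp (coprodZModLift _ _ hgens_pow) =
      freeProdToPSL :=
    comp_coprodZModLift _ _ _ braidToPSL_b3Gens
  have hinj : Function.Injective (QuotientGroup.lift K braidToPSL hKker) :=
    Function.Injective.of_comp_right
      (by rw [← MonoidHom.coe_comp, hcomp]; exact freeProdToPSL_injective) hsurj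
  exact ((QuotientGroup.injective_lift_iff _ _ hKker).mp hinj).symm

theorem stmt5 :
    ∃ g : B3 →* PSL2Z,
      g b3s1 = (QuotientGroup.mk MA : PSL2Z) ∧
      g b3s2 = (QuotientGroup.mk MB : PSL2Z) ∧
      Function.Surjective g ∧ g.ker = Subgroup.center B3 := by
  refine ⟨braidToPSL, braidToPSL_b3s1, braidToPSL_b3s2, braidToPSL_surjective,
    le_antisymm ?_ center_le_ker_braidToPSL⟩
  rw [ker_braidToPSL]
  exact Subgroup.normalClosure_le_normal (Set.singleton_subset_iff.mpr halfTwist_sq_mem_center)
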